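/- arXiv:1912.05353 — 11 statements merged into one kernel-verified Lean document; each statement's English description precedes it below -/
import Mathlib

section
/- For every integer n ≥ 1, ⌊(n+1)!·e⌋ = (n+1)·⌊n!·e⌋ + 1. -/
open Finset

private def A (n : ℕ) : ℕ := ∑ i ∈ range (n + 1), n.factorial / i.factorial

private lemma A_cast (n : ℕ) :
    (A n : ℝ) = (n.factorial : ℝ) * ∑ i ∈ range (n + 1), (1 : ℝ) / i.factorial := by
  rw [Finset.mul_sum, A, Nat.cast_sum]
  refine Finset.sum_congr rfl fun i hi => ?_
  have hdvd : i.factorial ∣ n.factorial :=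
    Nat.factorial_dvd_factorial (Nat.lt_succ_iff.mp (Finset.mem_range.mp hi))
  rw [Nat.cast_div hdvd (by positivity)]
  field_simp

private lemma A_succ (n : ℕ) : A (n + 1) = (n + 1) * A n + 1 := by
  rw [A, Finset.sum_range_succ, Nat.div_self (n + 1).factorial_pos, A, Finset.mul_sum]
  congr 1
  refine Finset.sum_congr rfl fun i hi => ?_
  have hdvd : i.factorial ∣ n.factorial :=
    Nat.factorial_dvd_factorial (Nat.lt_succ_iff.mp (Finset.mem_range.mp hi))
  rw [Nat.factorial_succ, Nat.mul_div_assoc _ hdvd]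

private lemma floor_eq_A (n : ℕ) (hn : 1 ≤ n) :
    ⌊(n.factorial : ℝ) * Real.exp 1⌋ = (A n : ℤ) := by
  have hfpos : (0 : ℝ) < n.factorial := by positivity
  rw [Int.floor_eq_iff]
  constructor
  · rw [Int.cast_natCast, A_cast]
    have hS := Real.sum_le_exp_of_nonneg (x := 1) zero_le_one (n + 1)
    simp only [one_pow] at hS
    nlinarith
  · have hub := Real.exp_bound' (x := 1) zero_le_one le_rfl (n := n + 1) (Nat.succ_pos n)
    simp only [one_pow] at hub
    have key : (n.factorial : ℝ) * Real.exp 1 ≤ (A n : ℝ) +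
        (n.factorial : ℝ) * ((n + 1 + 1) / ((n + 1).factorial * (n + 1))) := by
      rw [A_cast]
      have := mul_le_mul_of_nonneg_left hub hfpos.le
      push_cast at this ⊢
      simp only [one_mul] at this
      rw [mul_add] at this
      linarith
    have hfs : ((n + 1).factorial : ℝ) = (n + 1) * n.factorial := by
      rw [Nat.factorial_succ]; push_cast; ring
    have hlt : (n.factorial : ℝ) * ((n + 1 + 1) / ((n + 1).factorial * (n + 1))) < 1 := by
      rw [hfs, mul_div_assoc', div_lt_one (by positivity)]
      have hn' : (1 : ℝ) ≤ n := by exact_mod_cast hn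
      have hf1 : (1 : ℝ) ≤ n.factorial := by exact_mod_cast n.factorial_pos
      nlinarith
    push_cast
    linarith

theorem floor_succ_factorial_mul_e (n : ℕ) (hn : 1 ≤ n) :
    ⌊((n + 1).factorial : ℝ) * Real.exp 1⌋ =
      (n + 1) * ⌊(n.factorial : ℝ) * Real.exp 1⌋ + 1 := by
  rw [floor_eq_A n hn, floor_eq_A (n + 1) (by omega), A_succ]
  push_cast
  ring
end

section
/- Let q be a rational number and define f(n) = ⌊n!·(e−q)⌋ + 1 for natural numbers n. Then for every n ≥ 1 such that n!·q is an integer, f(n+1) = (n+1)·(f(n) − 1) + 2. -/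
noncomputable def eTail (n : ℕ) : ℝ :=
  (n.factorial : ℝ) * (Real.exp 1 - ∑ m ∈ Finset.range (n + 1), 1 / (m.factorial : ℝ))

lemma eTail_pos (n : ℕ) : 0 < eTail n := by
  have h1 : (∑ m ∈ Finset.range (n + 2), (1 : ℝ) ^ m / m.factorial) ≤ Real.exp 1 :=
    Real.sum_le_exp_of_nonneg zero_le_one _
  simp only [one_pow] at h1
  rw [Finset.sum_range_succ] at h1
  have h2 : (0 : ℝ) < 1 / ((n + 1).factorial : ℝ) := by positivity
  have hf : (0 : ℝ) < (n.factorial : ℝ) := by positivity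
  exact mul_pos hf (by linarith)

lemma eTail_lt_one (n : ℕ) (hn : 1 ≤ n) : eTail n < 1 := by
  have hb := Real.exp_bound (x := 1) (by norm_num) (n := n + 1) (by positivity)
  simp only [one_pow, abs_one, Nat.succ_eq_add_one] at hb
  have hb' : Real.exp 1 - ∑ m ∈ Finset.range (n + 1), 1 / (m.factorial : ℝ) ≤
      ((n : ℝ) + 1 + 1) / (((n + 1).factorial : ℝ) * ((n : ℝ) + 1)) := by
    have := (abs_le.mp hb).2
    simp only [one_div] at this ⊢
    push_cast at this ⊢
    linarith
  have hf : (0 : ℝ) < (n.factorial : ℝ) := by positivity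
  have key : (n.factorial : ℝ) * (((n : ℝ) + 1 + 1) / (((n + 1).factorial : ℝ) * ((n : ℝ) + 1))) < 1 := by
    rw [Nat.factorial_succ]
    push_cast
    rw [mul_div_assoc', div_lt_one (by positivity)]
    have hn1 : (1 : ℝ) ≤ (n : ℝ) := by exact_mod_cast hn
    nlinarith [mul_lt_mul_of_pos_left (show (n : ℝ) + 1 + 1 < ((n : ℝ) + 1) * ((n : ℝ) + 1) by nlinarith) hf]
  calc eTail n ≤ (n.factorial : ℝ) * (((n : ℝ) + 1 + 1) / (((n + 1).factorial : ℝ) * ((n : ℝ) + 1))) := by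
        unfold eTail; exact mul_le_mul_of_nonneg_left hb' hf.le
    _ < 1 := key

lemma eTail_succ (n : ℕ) : eTail (n + 1) = (n + 1) * eTail n - 1 := by
  unfold eTail
  rw [Finset.sum_range_succ, Nat.factorial_succ]
  have h : ((n + 1).factorial : ℝ) ≠ 0 := by positivity
  rw [Nat.factorial_succ] at h
  push_cast at h ⊢
  field_simp
  ring

lemma factorial_mul_sum (n : ℕ) :
    (n.factorial : ℝ) * ∑ m ∈ Finset.range (n + 1), 1 / (m.factorial : ℝ) =
      ((∑ m ∈ Finset.range (n + 1), (n.factorial / m.factorial : ℕ) : ℕ) : ℝ) := by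
  rw [Finset.mul_sum]
  push_cast
  refine Finset.sum_congr rfl fun m hm => ?_
  rw [Nat.cast_div (Nat.factorial_dvd_factorial (Nat.lt_succ_iff.mp (Finset.mem_range.mp hm)))
    (by positivity), mul_one_div]

theorem rec_model (q : ℚ) (f : ℕ → ℤ)
    (hf : ∀ n : ℕ, f n = ⌊(n.factorial : ℝ) * (Real.exp 1 - (q : ℝ))⌋ + 1)
    (n : ℕ) (hn : 1 ≤ n) (hq : ∃ m : ℤ, (n.factorial : ℚ) * q = m) :
    f (n + 1) = (n + 1) * (f n - 1) + 2 := by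
  obtain ⟨m, hm⟩ := hq
  have hmR : (n.factorial : ℝ) * (q : ℝ) = (m : ℝ) := by exact_mod_cast hm
  set A : ℤ := ((∑ m ∈ Finset.range (n + 1), (n.factorial / m.factorial : ℕ) : ℕ) : ℤ) with hA
  have hAS : (n.factorial : ℝ) * ∑ m ∈ Finset.range (n + 1), 1 / (m.factorial : ℝ) = (A : ℝ) := by
    rw [factorial_mul_sum, hA]; exact (Int.cast_natCast _).symm
  -- n!(e-q) = (A - m) + eTail n
  have h1 : (n.factorial : ℝ) * (Real.exp 1 - (q : ℝ)) = ((A - m : ℤ) : ℝ) + eTail n := by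
    unfold eTail; push_cast; linarith [hAS]
  -- (n+1)!(e-q) = ((n+1)(A-m)+1) + eTail (n+1)
  have h2 : ((n + 1).factorial : ℝ) * (Real.exp 1 - (q : ℝ)) =
      (((n + 1 : ℤ) * (A - m) + 1 : ℤ) : ℝ) + eTail (n + 1) := by
    rw [eTail_succ, Nat.factorial_succ]
    push_cast
    have := h1
    push_cast at this
    unfold eTail at this ⊢
    nlinarith [this]
  have hfl1 : ⌊(n.factorial : ℝ) * (Real.exp 1 - (q : ℝ))⌋ = A - m := by
    rw [h1, add_comm (((A - m : ℤ) : ℝ)) (eTail n), Int.floor_add_intCast,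
      Int.floor_eq_zero_iff.mpr ⟨(eTail_pos n).le, eTail_lt_one n hn⟩, zero_add]
  have hfl2 : ⌊((n + 1).factorial : ℝ) * (Real.exp 1 - (q : ℝ))⌋ = (n + 1 : ℤ) * (A - m) + 1 := by
    rw [h2, add_comm ((((n + 1 : ℤ) * (A - m) + 1 : ℤ) : ℝ)) (eTail (n + 1)), Int.floor_add_intCast]
    rw [Int.floor_eq_zero_iff.mpr ⟨(eTail_pos (n + 1)).le, eTail_lt_one (n + 1) (by omega)⟩,
      zero_add]
  rw [hf (n + 1), hf n, hfl1, hfl2]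
  ring
end

section
/- Let R : ℕ → ℕ satisfy R(n+1) ≤ (n+1)·(R(n) − 1) + 2 for all n ≥ 2. Let k ≥ 2 be an integer and q a rational number with k!·q an integer, such that R(k) ≤ k!·(e−q) + 1. Then R(n) ≤ n!·(e−q) + 1 for all n ≥ k. -/
open Finset

private lemma cast_sum_fac (n : ℕ) :
    ((∑ j ∈ range (n+1), n.factorial / j.factorial : ℕ) : ℝ)
      = (n.factorial : ℝ) * ∑ j ∈ range (n+1), 1 / (j.factorial : ℝ) := by
  rw [Nat.cast_sum, mul_sum]
  refine sum_congr rfl fun j hj => ?_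
  have hdvd := Nat.factorial_dvd_factorial (Nat.lt_succ_iff.mp (mem_range.mp hj))
  rw [Nat.cast_div hdvd (by positivity)]
  ring

private lemma tail_lb (n : ℕ) :
    1/((n:ℝ)+1) ≤ (n.factorial : ℝ) * Real.exp 1
      - ((∑ j ∈ range (n+1), n.factorial / j.factorial : ℕ) : ℝ) := by
  rw [cast_sum_fac]
  have h := Real.sum_le_exp_of_nonneg (x := 1) zero_le_one (n+2)
  simp only [one_pow] at h
  rw [sum_range_succ] at h
  have hfac : ((n+1).factorial : ℝ) = ((n:ℝ)+1) * (n.factorial : ℝ) := by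
    rw [Nat.factorial_succ]; push_cast; ring
  have hne : (0:ℝ) < (n.factorial : ℝ) := by positivity
  have key : ∑ j ∈ range (n+1), 1 / (j.factorial : ℝ) + 1/(((n:ℝ)+1) * (n.factorial : ℝ)) ≤ Real.exp 1 := by
    rw [← hfac]; exact h
  have h2 : 1/((n:ℝ)+1) = (n.factorial : ℝ) * (1/(((n:ℝ)+1) * (n.factorial : ℝ))) := by
    field_simp
  rw [h2]
  nlinarith [key, hne]

private lemma tail_ub (n : ℕ) (hn : 1 ≤ n) :
    (n.factorial : ℝ) * Real.exp 1
      - ((∑ j ∈ range (n+1), n.factorial / j.factorial : ℕ) : ℝ) < 1 := by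
  rw [cast_sum_fac]
  have h := Real.exp_bound (x := 1) (by norm_num) (n := n+1) (by omega)
  simp only [one_pow, abs_one] at h
  rw [abs_le] at h
  have hfac : ((n+1).factorial : ℝ) = ((n:ℝ)+1) * (n.factorial : ℝ) := by
    rw [Nat.factorial_succ]; push_cast; ring
  have hne : (0:ℝ) < (n.factorial : ℝ) := by positivity
  have hn1 : (1:ℝ) ≤ (n:ℝ) := by exact_mod_cast hn
  have hbound : Real.exp 1 - ∑ j ∈ range (n+1), 1 / (j.factorial : ℝ)
      ≤ ((n:ℝ)+2) / (((n:ℝ)+1) * (n.factorial : ℝ) * ((n:ℝ)+1)) :=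
    le_trans h.2 (le_of_eq (by rw [hfac]; push_cast; ring))
  have hnn : (0:ℝ) < ((n:ℝ)+1) * ((n:ℝ)+1) := by positivity
  have key : (n.factorial : ℝ) * (((n:ℝ)+2) / (((n:ℝ)+1) * (n.factorial : ℝ) * ((n:ℝ)+1)))
      = ((n:ℝ)+2) / (((n:ℝ)+1) * ((n:ℝ)+1)) := by
    field_simp
  have hlt : ((n:ℝ)+2) / (((n:ℝ)+1) * ((n:ℝ)+1)) < 1 := by
    rw [div_lt_one hnn]; nlinarith
  calc (n.factorial : ℝ) * Real.exp 1 - (n.factorial : ℝ) * ∑ j ∈ range (n+1), 1 / (j.factorial : ℝ)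
      = (n.factorial : ℝ) * (Real.exp 1 - ∑ j ∈ range (n+1), 1 / (j.factorial : ℝ)) := by ring
    _ ≤ (n.factorial : ℝ) * (((n:ℝ)+2) / (((n:ℝ)+1) * (n.factorial : ℝ) * ((n:ℝ)+1))) := by
        exact mul_le_mul_of_nonneg_left hbound (le_of_lt hne)
    _ = ((n:ℝ)+2) / (((n:ℝ)+1) * ((n:ℝ)+1)) := key
    _ < 1 := hlt

theorem adaptive_bound (R : ℕ → ℕ)
    (hR : ∀ n : ℕ, 2 ≤ n → (R (n + 1) : ℤ) ≤ (n + 1) * ((R n : ℤ) - 1) + 2)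
    (k : ℕ) (hk : 2 ≤ k) (q : ℚ) (hq : ∃ m : ℤ, (k.factorial : ℚ) * q = m)
    (hRk : (R k : ℝ) ≤ (k.factorial : ℝ) * (Real.exp 1 - (q : ℝ)) + 1) :
    ∀ n : ℕ, k ≤ n → (R n : ℝ) ≤ (n.factorial : ℝ) * (Real.exp 1 - (q : ℝ)) + 1 := by
  intro n hn
  induction n, hn using Nat.le_induction with
  | base => exact hRk
  | succ n hn ih =>
    obtain ⟨m₀, hm₀⟩ := hq
    have hn2 : 2 ≤ n := le_trans hk hn
    set M : ℕ := ∑ j ∈ range (n+1), n.factorial / j.factorial with hM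
    obtain ⟨d, hd⟩ : ∃ d : ℕ, d * k.factorial = n.factorial :=
      ⟨_, Nat.div_mul_cancel (Nat.factorial_dvd_factorial hn)⟩
    set c : ℤ := (d : ℤ) * m₀ with hcdef
    have hcq : (n.factorial : ℚ) * q = (c : ℚ) := by
      rw [← hd, hcdef]
      push_cast
      rw [mul_assoc, hm₀]
    have hcR : (n.factorial : ℝ) * (q : ℝ) = (c : ℝ) := by
      have := congrArg (fun x : ℚ => (x : ℝ)) hcq
      push_cast at this
      exact this
    have hub := tail_ub n (by omega)
    have hlb := tail_lb n
    -- integer rounding: R n ≤ M - c + 1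
    have h1 : (R n : ℝ) < ((M : ℤ) - c + 2 : ℤ) := by
      push_cast
      have : (n.factorial : ℝ) * (Real.exp 1 - (q : ℝ)) = (n.factorial : ℝ) * Real.exp 1 - (c : ℝ) := by
        rw [mul_sub, hcR]
      nlinarith [ih, hub]
    have h2 : (R n : ℤ) ≤ (M : ℤ) - c + 1 := by
      have : (R n : ℤ) < (M : ℤ) - c + 2 := by exact_mod_cast h1
      omega
    -- recursion step in ℤ
    have h3 : (R (n+1) : ℤ) ≤ ((n : ℤ) + 1) * ((M : ℤ) - c) + 2 := by
      have hrec := hR n hn2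
      have hpos : (0 : ℤ) ≤ (n : ℤ) + 1 := by positivity
      nlinarith [hrec, h2, hpos]
    -- back to ℝ
    have h3R : (R (n+1) : ℝ) ≤ ((n : ℝ) + 1) * ((M : ℝ) - (c : ℝ)) + 2 := by
      exact_mod_cast h3
    have hfac : ((n+1).factorial : ℝ) = ((n:ℝ)+1) * (n.factorial : ℝ) := by
      rw [Nat.factorial_succ]; push_cast; ring
    have hinv : ((n:ℝ)+1) * (1/((n:ℝ)+1)) = 1 := by
      field_simp
    have hfinal : ((n:ℝ)+1) * ((M : ℝ) - (c : ℝ)) + 2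
        ≤ ((n+1).factorial : ℝ) * (Real.exp 1 - (q : ℝ)) + 1 := by
      rw [hfac]
      have hexp : ((n:ℝ)+1) * (n.factorial : ℝ) * (Real.exp 1 - (q : ℝ))
          = ((n:ℝ)+1) * ((n.factorial : ℝ) * Real.exp 1 - (c : ℝ)) := by
        linear_combination (-((n:ℝ)+1)) * hcR
      rw [hexp]
      nlinarith [hlb, hinv, mul_le_mul_of_nonneg_left hlb (by positivity : (0:ℝ) ≤ (n:ℝ)+1)]
    exact le_trans h3R hfinal
end

section
/- Let R : ℕ → ℕ satisfy R(n+1) ≤ (n+1)·(R(n) − 1) + 2 for all n ≥ 2, and suppose R(4) ≤ 62. Then R(n) ≤ n!·(e − 1/6) + 1 for all n ≥ 4. -/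
theorem bound_62 (R : ℕ → ℕ)
    (hR : ∀ n : ℕ, 2 ≤ n → (R (n + 1) : ℤ) ≤ (n + 1) * ((R n : ℤ) - 1) + 2)
    (h4 : R 4 ≤ 62) :
    ∀ n : ℕ, 4 ≤ n → (R n : ℝ) ≤ (n.factorial : ℝ) * (Real.exp 1 - 1 / 6) + 1 := by
  have key : ∀ n : ℕ, 4 ≤ n →
      (R n : ℝ) ≤ (n.factorial : ℝ) *
        ((∑ k ∈ Finset.range (n + 1), (1 : ℝ) / k.factorial) - 1 / 6) + 1 := by
    intro n hn
    induction n, hn using Nat.le_induction with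
    | base =>
      have : (R 4 : ℝ) ≤ 62 := by exact_mod_cast h4
      refine this.trans ?_
      simp [Finset.sum_range_succ, Nat.factorial]
      norm_num
    | succ n hn ih =>
      have h2 : (2:ℕ) ≤ n := by omega
      have hrec : (R (n + 1) : ℝ) ≤ (n + 1) * ((R n : ℝ) - 1) + 2 := by
        exact_mod_cast hR n h2
      have hfac : ((n+1).factorial : ℝ) = (n + 1) * n.factorial := by
        push_cast [Nat.factorial_succ]; ring
      have hfacpos : (0:ℝ) < (n+1 : ℝ) := by positivity
      calc (R (n + 1) : ℝ) ≤ (n + 1) * ((R n : ℝ) - 1) + 2 := hrec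
        _ ≤ (n + 1) * ((n.factorial : ℝ) *
              ((∑ k ∈ Finset.range (n + 1), (1 : ℝ) / k.factorial) - 1 / 6)) + 2 := by
            have : (R n : ℝ) - 1 ≤ (n.factorial : ℝ) *
                ((∑ k ∈ Finset.range (n + 1), (1 : ℝ) / k.factorial) - 1 / 6) := by
              linarith [ih]
            nlinarith [this, hfacpos]
        _ = ((n+1).factorial : ℝ) *
              ((∑ k ∈ Finset.range (n + 1 + 1), (1 : ℝ) / k.factorial) - 1 / 6) + 1 := by
            have hne : ((n:ℝ)+1) * n.factorial ≠ 0 := by positivity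
            have h1 : ((n:ℝ)+1) * n.factorial * (1/(((n:ℝ)+1) * n.factorial)) = 1 := by
              field_simp
            rw [Finset.sum_range_succ (fun k => (1:ℝ)/k.factorial) (n+1), hfac]
            conv_rhs => rw [mul_sub, mul_add, mul_one_div_cancel hne]
            ring
  intro n hn
  have hsum : (∑ k ∈ Finset.range (n + 1), (1 : ℝ) / k.factorial) ≤ Real.exp 1 := by
    have := Real.sum_le_exp_of_nonneg (x := 1) zero_le_one (n + 1)
    simpa using this
  have hfacnn : (0:ℝ) ≤ (n.factorial : ℝ) := by positivity
  have := key n hn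
  nlinarith [this, hsum, hfacnn]
end

section
/- Let R : ℕ → ℕ satisfy R(n+1) ≤ (n+1)·(R(n) − 1) + 2 for all n ≥ 2, and suppose R(4) = 51. Then R(n) ≤ n!·(e − 5/8) + 1 for all n ≥ 4. -/
theorem bound_51 (R : ℕ → ℕ)
    (hR : ∀ n : ℕ, 2 ≤ n → (R (n + 1) : ℤ) ≤ (n + 1) * ((R n : ℤ) - 1) + 2)
    (h4 : R 4 = 51) :
    ∀ n : ℕ, 4 ≤ n → (R n : ℝ) ≤ (n.factorial : ℝ) * (Real.exp 1 - 5 / 8) + 1 := by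
  have key : ∀ n : ℕ, 4 ≤ n → (R n : ℝ) ≤
      (n.factorial : ℝ) * ((∑ k ∈ Finset.range (n + 1), (1 : ℝ) / k.factorial) - 5 / 8) + 1 := by
    intro n hn
    induction n, hn using Nat.le_induction with
    | base =>
      norm_num [h4, Finset.sum_range_succ, Nat.factorial]
    | succ n hn ih =>
      have h := hR n (by omega)
      have h' : (R (n + 1) : ℝ) ≤ (n + 1) * ((R n : ℝ) - 1) + 2 := by exact_mod_cast h
      have hfact : ((n + 1).factorial : ℝ) = (n + 1) * n.factorial := by
        push_cast [Nat.factorial_succ]; ring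
      have hsum : (∑ k ∈ Finset.range (n + 2), (1 : ℝ) / k.factorial)
          = (∑ k ∈ Finset.range (n + 1), (1 : ℝ) / k.factorial) + 1 / (n + 1).factorial := by
        rw [Finset.sum_range_succ]
      have hfpos : (0 : ℝ) < ((n + 1).factorial : ℝ) := by positivity
      rw [hsum]
      have := ih
      have hnn : (0 : ℝ) ≤ (n : ℝ) + 1 := by positivity
      calc (R (n + 1) : ℝ) ≤ (n + 1) * ((R n : ℝ) - 1) + 2 := h'
        _ ≤ (n + 1) * ((n.factorial : ℝ) * ((∑ k ∈ Finset.range (n + 1), (1 : ℝ) / k.factorial) - 5 / 8)) + 2 := by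
            nlinarith [ih]
        _ = ((n + 1).factorial : ℝ) *
              ((∑ k ∈ Finset.range (n + 1), (1 : ℝ) / k.factorial) + 1 / (n + 1).factorial - 5 / 8) + 1 := by
            rw [hfact]
            field_simp
            ring
  intro n hn
  have hsle : (∑ k ∈ Finset.range (n + 1), (1 : ℝ) / k.factorial) ≤ Real.exp 1 := by
    have := Real.sum_le_exp_of_nonneg (x := (1 : ℝ)) (by norm_num) (n + 1)
    simpa using this
  have hf : (0 : ℝ) ≤ (n.factorial : ℝ) := by positivity
  have := key n hn
  nlinarith [this, hsle, hf]
end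

section
/- Let R : ℕ → ℕ satisfy R(n+1) ≤ (n+1)·(R(n) − 1) + 2 for all n ≥ 2, and suppose R(4) ≤ 54. Then R(n) ≤ n!·(e − 1/2) + 1 for all n ≥ 4. -/
def bound54Aux : ℕ → ℕ
  | 0 => 1
  | n + 1 => (n + 1) * bound54Aux n + 1

lemma bound54Aux_eq (n : ℕ) :
    (bound54Aux n : ℝ) = (n.factorial : ℝ) *
      ∑ k ∈ Finset.range (n + 1), 1 / (k.factorial : ℝ) := by
  induction n with
  | zero => simp [bound54Aux]
  | succ n ih =>
    have hf : ((n:ℝ)+1) * (n.factorial:ℝ) ≠ 0 := by positivity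
    rw [Finset.sum_range_succ]
    simp only [bound54Aux, Nat.factorial_succ]
    push_cast
    rw [ih, mul_add, mul_one_div, div_self hf]
    ring

lemma bound54Aux_le (n : ℕ) : (bound54Aux n : ℝ) ≤ (n.factorial : ℝ) * Real.exp 1 := by
  rw [bound54Aux_eq]
  have h := Real.sum_le_exp_of_nonneg (x := 1) zero_le_one (n + 1)
  simp only [one_pow] at h
  have : (0:ℝ) ≤ (n.factorial : ℝ) := by positivity
  nlinarith [h]

theorem bound_54 (R : ℕ → ℕ)
    (hR : ∀ n : ℕ, 2 ≤ n → (R (n + 1) : ℤ) ≤ (n + 1) * ((R n : ℤ) - 1) + 2)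
    (h4 : R 4 ≤ 54) :
    ∀ n : ℕ, 4 ≤ n → (R n : ℝ) ≤ (n.factorial : ℝ) * (Real.exp 1 - 1 / 2) + 1 := by
  have key : ∀ n : ℕ, 4 ≤ n →
      2 * (R n : ℤ) ≤ 2 * (bound54Aux n : ℤ) - (n.factorial : ℤ) + 2 := by
    intro n hn
    induction n, hn using Nat.le_induction with
    | base =>
      have : bound54Aux 4 = 65 := by decide
      rw [this]
      norm_num [Nat.factorial]
      omega
    | succ n hn ih =>
      have h1 := hR n (by omega)
      have h2 : (0:ℤ) ≤ (n:ℤ) + 1 := by positivity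
      have h3 : ((n+1).factorial : ℤ) = ((n:ℤ) + 1) * (n.factorial : ℤ) := by
        push_cast [Nat.factorial_succ]; ring
      have h4' : (bound54Aux (n+1) : ℤ) = ((n:ℤ) + 1) * (bound54Aux n : ℤ) + 1 := by
        simp [bound54Aux]
      nlinarith [mul_le_mul_of_nonneg_left ih h2]
  intro n hn
  have hk := key n hn
  have hA := bound54Aux_le n
  have hR' : (R n : ℝ) ≤ (bound54Aux n : ℝ) - (n.factorial : ℝ) / 2 + 1 := by
    have : (2 * (R n) : ℝ) ≤ 2 * (bound54Aux n : ℝ) - (n.factorial : ℝ) + 2 := by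
      exact_mod_cast (by exact_mod_cast hk : (2 * (R n : ℤ) : ℝ) ≤ 2 * (bound54Aux n : ℤ) - (n.factorial : ℤ) + 2)
    linarith
  have : (bound54Aux n : ℝ) - (n.factorial : ℝ) / 2 ≤ (n.factorial : ℝ) * (Real.exp 1 - 1/2) := by
    rw [mul_sub]; linarith
  linarith
end

section
/- Let R : ℕ → ℕ satisfy R(n+1) ≤ (n+1)·(R(n) − 1) + 2 for all n ≥ 2, and suppose R(5) ≤ 227. Then R(n) ≤ n!·(e − 5/6) + 1 for all n ≥ 5. -/
def dseq : ℕ → ℤ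
  | 0 => 1
  | n + 1 => (n + 1) * dseq n + 1

lemma dseq_eq (n : ℕ) :
    (dseq n : ℝ) = (n.factorial : ℝ) * ∑ k ∈ Finset.range (n + 1), (1 : ℝ) / k.factorial := by
  induction n with
  | zero => simp [dseq]
  | succ n ih =>
    have hfac : ((n + 1).factorial : ℝ) ≠ 0 := by positivity
    rw [Finset.sum_range_succ, mul_add]
    have h1 : ((n + 1).factorial : ℝ) * ∑ k ∈ Finset.range (n + 1), (1 : ℝ) / k.factorial
        = (n + 1) * (dseq n : ℝ) := by
      rw [ih, Nat.factorial_succ]; push_cast; ring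
    rw [h1, mul_one_div, div_self hfac]
    simp only [dseq]
    push_cast
    ring

lemma dseq_le (n : ℕ) : (dseq n : ℝ) ≤ (n.factorial : ℝ) * Real.exp 1 := by
  rw [dseq_eq]
  have h := Real.sum_le_exp_of_nonneg (x := 1) (by norm_num) (n + 1)
  simp only [one_pow] at h
  have : (0 : ℝ) ≤ (n.factorial : ℝ) := by positivity
  calc (n.factorial : ℝ) * ∑ k ∈ Finset.range (n + 1), (1 : ℝ) / k.factorial
      ≤ (n.factorial : ℝ) * Real.exp 1 := by
        apply mul_le_mul_of_nonneg_left _ this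
        exact h

theorem bound_227 (R : ℕ → ℕ)
    (hR : ∀ n : ℕ, 2 ≤ n → (R (n + 1) : ℤ) ≤ (n + 1) * ((R n : ℤ) - 1) + 2)
    (h5 : R 5 ≤ 227) :
    ∀ n : ℕ, 5 ≤ n → (R n : ℝ) ≤ (n.factorial : ℝ) * (Real.exp 1 - 5 / 6) + 1 := by
  have key : ∀ n : ℕ, 5 ≤ n →
      6 * (R n : ℤ) ≤ 6 * dseq n - 5 * (n.factorial : ℤ) + 6 := by
    intro n hn
    induction n with
    | zero => omega
    | succ n ih =>
      rcases Nat.lt_or_ge n 5 with h | h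
      · interval_cases n
        · omega
        · omega
        · omega
        · omega
        · -- n = 4, n+1 = 5
          have : dseq 5 = 326 := by norm_num [dseq]
          rw [this]
          have : (Nat.factorial 5 : ℤ) = 120 := by norm_num [Nat.factorial]
          rw [this]
          have := h5
          have he : R (4 + 1) = R 5 := rfl
          omega
      · have ihn := ih h
        have hrec := hR n (by omega)
        have hfac : ((n + 1).factorial : ℤ) = (n + 1) * n.factorial := by
          rw [Nat.factorial_succ]; push_cast; ring
        have hd : dseq (n + 1) = (n + 1) * dseq n + 1 := rfl
        have hn1 : (5 : ℤ) ≤ n := by exact_mod_cast h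
        nlinarith [hrec, ihn, hfac, hd]
  intro n hn
  have hk := key n hn
  have hd := dseq_le n
  have hk' : (6 : ℝ) * (R n : ℝ) ≤ 6 * (dseq n : ℝ) - 5 * (n.factorial : ℝ) + 6 := by
    exact_mod_cast hk
  nlinarith [hd, hk']
end

section
/- Let R : ℕ → ℕ satisfy R(n+1) ≤ (n+1)·(R(n) − 1) + 2 for all n ≥ 2, and suppose R(5) = 162. Then R(n) ≤ n!·(e − 11/8) + 1 for all n ≥ 5. -/
theorem bound_162 (R : ℕ → ℕ)
    (hR : ∀ n : ℕ, 2 ≤ n → (R (n + 1) : ℤ) ≤ (n + 1) * ((R n : ℤ) - 1) + 2)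
    (h5 : R 5 = 162) :
    ∀ n : ℕ, 5 ≤ n → (R n : ℝ) ≤ (n.factorial : ℝ) * (Real.exp 1 - 11 / 8) + 1 := by
  have key : ∀ n : ℕ, 5 ≤ n → (R n : ℝ) - 1 ≤
      (n.factorial : ℝ) * (161/120 + ∑ k ∈ Finset.Icc 6 n, (1:ℝ)/k.factorial) := by
    intro n hn
    induction n, hn using Nat.le_induction with
    | base =>
      have : Finset.Icc 6 5 = (∅ : Finset ℕ) := by decide
      simp [h5, this, Nat.factorial]
      norm_num
    | succ n hn ih =>
      have h1 := hR n (by omega)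
      have h1' : (R (n+1) : ℝ) ≤ (n+1) * ((R n : ℝ) - 1) + 2 := by exact_mod_cast h1
      have hfact : ((n+1).factorial : ℝ) = (n+1) * n.factorial := by
        rw [Nat.factorial_succ]; push_cast; ring
      have hsum : ∑ k ∈ Finset.Icc 6 (n+1), (1:ℝ)/k.factorial
          = (∑ k ∈ Finset.Icc 6 n, (1:ℝ)/k.factorial) + 1/(n+1).factorial := by
        rw [Finset.sum_Icc_succ_top (by omega)]
      have hnp : (0:ℝ) ≤ (n:ℝ) + 1 := by positivity
      have hfne : ((n+1).factorial : ℝ) ≠ 0 := by positivity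
      calc (R (n+1) : ℝ) - 1 ≤ ((n:ℝ)+1) * ((R n : ℝ) - 1) + 1 := by linarith
        _ ≤ ((n:ℝ)+1) * ((n.factorial : ℝ) * (161/120 + ∑ k ∈ Finset.Icc 6 n, (1:ℝ)/k.factorial)) + 1 :=
            by nlinarith [ih]
        _ = ((n+1).factorial : ℝ) * (161/120 + ∑ k ∈ Finset.Icc 6 (n+1), (1:ℝ)/k.factorial) := by
            rw [hsum, hfact]
            field_simp
            ring
  intro n hn
  have h2 := key n hn
  have h3 : 161/120 + ∑ k ∈ Finset.Icc 6 n, (1:ℝ)/k.factorial ≤ Real.exp 1 - 11/8 := by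
    have hexp := Real.sum_le_exp_of_nonneg (x := 1) zero_le_one (n+1)
    have hsplit : ∑ i ∈ Finset.range (n+1), (1:ℝ)^i / i.factorial
        = (∑ i ∈ Finset.range 6, (1:ℝ)^i / i.factorial) + ∑ i ∈ Finset.Ico 6 (n+1), (1:ℝ)^i / i.factorial := by
      rw [Finset.range_eq_Ico, ← Finset.sum_Ico_consecutive _ (by omega : 0 ≤ 6) (by omega : 6 ≤ n+1), Finset.range_eq_Ico]
    have h6 : (∑ i ∈ Finset.range 6, (1:ℝ)^i / i.factorial) = 163/60 := by
      simp [Finset.sum_range_succ, Nat.factorial]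
      norm_num
    have hIcc : ∑ i ∈ Finset.Ico 6 (n+1), (1:ℝ)^i / i.factorial
        = ∑ k ∈ Finset.Icc 6 n, (1:ℝ)/k.factorial := by
      rw [← Finset.Ico_add_one_right_eq_Icc]
      exact Finset.sum_congr rfl (fun x _ => by rw [one_pow])
    rw [hsplit, h6, hIcc] at hexp
    linarith
  have hfpos : (0:ℝ) < (n.factorial : ℝ) := by positivity
  nlinarith [h2, h3, mul_le_mul_of_nonneg_left h3 hfpos.le]
end

section
/- Let R : ℕ → ℕ satisfy R(n+1) ≤ (n+1)·(R(n) − 1) + 2 for all n ≥ 2, with R(2) = 6. Then R(n) ≤ n!·e + 1 for all n ≥ 2. -/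
open Finset in
theorem classical_bound (R : ℕ → ℕ)
    (hR : ∀ n : ℕ, 2 ≤ n → (R (n + 1) : ℤ) ≤ (n + 1) * ((R n : ℤ) - 1) + 2)
    (h2 : R 2 = 6) :
    ∀ n : ℕ, 2 ≤ n → (R n : ℝ) ≤ (n.factorial : ℝ) * Real.exp 1 + 1 := by
  have key : ∀ n : ℕ, 2 ≤ n →
      (R n : ℝ) ≤ (n.factorial : ℝ) * (∑ k ∈ range (n + 1), (1 : ℝ) / k.factorial) + 1 := by
    intro n hn
    induction n with
    | zero => omega
    | succ m ih =>
      rcases Nat.lt_or_ge m 2 with hm | hm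
      · interval_cases m
        · omega
        · simp only [h2]
          norm_num [Finset.sum_range_succ, Nat.factorial]
      · have hstep := hR m hm
        have hind := ih hm
        have hcast : (R (m + 1) : ℝ) ≤ (m + 1) * ((R m : ℝ) - 1) + 2 := by
          exact_mod_cast hstep
        have : (R (m + 1) : ℝ) ≤ (m + 1) * ((m.factorial : ℝ) *
            (∑ k ∈ range (m + 1), (1 : ℝ) / k.factorial)) + 2 := by
          nlinarith [hind, hcast]
        calc (R (m + 1) : ℝ) ≤ (m + 1) * ((m.factorial : ℝ) *
            (∑ k ∈ range (m + 1), (1 : ℝ) / k.factorial)) + 2 := this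
        _ = ((m + 1).factorial : ℝ) * (∑ k ∈ range (m + 2), (1 : ℝ) / k.factorial) + 1 := by
            have hfac : ((m + 1).factorial : ℝ) ≠ 0 := by positivity
            have hs : (∑ k ∈ range (m + 2), (1:ℝ)/k.factorial)
                = (∑ k ∈ range (m+1), (1:ℝ)/k.factorial) + 1/((m+1).factorial : ℝ) :=
              Finset.sum_range_succ _ (m+1)
            rw [hs, mul_add, mul_one_div, div_self hfac, Nat.factorial_succ]
            push_cast
            ring
  intro n hn
  have hsum : (∑ k ∈ range (n + 1), (1 : ℝ) / k.factorial) ≤ Real.exp 1 := by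
    have := Real.sum_le_exp_of_nonneg (x := 1) (by norm_num) (n + 1)
    simpa using this
  have := key n hn
  have hfac : (0 : ℝ) ≤ (n.factorial : ℝ) := by positivity
  nlinarith [mul_le_mul_of_nonneg_left hsum hfac]
end

section
/- For any rational q and integers 2 ≤ k with k!·q an integer, if a function f : ℕ → ℤ is defined by f(n) = ⌊n!·(e−q)⌋ + 1, then for all n ≥ k, f(n) = n!·(f(k)−1)/k! + Σ_{i=k+1}^{n} n!/i! + 1. -/
open Finset

lemma cast_sum_fact_div (n : ℕ) :
    ((∑ i ∈ range (n + 1), (n.factorial / i.factorial : ℕ) : ℕ) : ℝ) =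
      (n.factorial : ℝ) * ∑ i ∈ range (n + 1), (1 : ℝ) / i.factorial := by
  rw [Finset.mul_sum, Nat.cast_sum]
  refine Finset.sum_congr rfl fun i hi => ?_
  have hdvd : i.factorial ∣ n.factorial :=
    Nat.factorial_dvd_factorial (Nat.lt_succ_iff.mp (Finset.mem_range.mp hi))
  rw [Nat.cast_div hdvd (by positivity)]
  field_simp

lemma floor_fact_exp (n : ℕ) (hn : 1 ≤ n) :
    ⌊(n.factorial : ℝ) * Real.exp 1⌋ =
      (∑ i ∈ range (n + 1), (n.factorial / i.factorial : ℕ) : ℕ) := by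
  have hfac : (0 : ℝ) < n.factorial := by positivity
  have hcast := cast_sum_fact_div n
  have hAle : ∑ i ∈ range (n + 1), (1 : ℝ) / i.factorial ≤ Real.exp 1 := by
    have h := Real.sum_le_exp_of_nonneg zero_le_one (n + 1)
    simpa [one_pow] using h
  have h := Real.exp_bound (x := 1) (by norm_num) (n := n + 1) (by omega)
  have h2 := (abs_le.mp h).2
  simp only [one_pow, abs_one, one_mul] at h2
  push_cast at h2
  have hpos : (0 : ℝ) < ↑(n + 1).factorial * (↑n + 1) := by positivity
  have hn' : (1 : ℝ) ≤ n := by exact_mod_cast hn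
  have hBlt : (n.factorial : ℝ) * ((↑n + 1 + 1) / (↑(n + 1).factorial * (↑n + 1))) < 1 := by
    rw [← mul_div_assoc, div_lt_one hpos, Nat.factorial_succ]
    push_cast
    have hq : (0 : ℝ) < (n : ℝ) * (n : ℝ) + n - 1 := by nlinarith
    nlinarith [mul_pos hfac hq]
  rw [Int.floor_eq_iff, Int.cast_natCast, hcast]
  constructor
  · exact mul_le_mul_of_nonneg_left hAle hfac.le
  · have h3 := mul_le_mul_of_nonneg_left h2 hfac.le
    rw [mul_sub] at h3
    linarith

theorem closed_form (q : ℚ) (k : ℕ) (hk : 2 ≤ k)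
    (hq : ∃ m : ℤ, (k.factorial : ℚ) * q = m) (f : ℕ → ℤ)
    (hf : ∀ n : ℕ, f n = ⌊(n.factorial : ℝ) * (Real.exp 1 - (q : ℝ))⌋ + 1) :
    ∀ n : ℕ, k ≤ n →
      f n = (n.factorial / k.factorial : ℕ) * (f k - 1) +
        ∑ i ∈ Finset.Icc (k + 1) n, (n.factorial / i.factorial : ℕ) + 1 := by
  obtain ⟨m, hm⟩ := hq
  have hval : ∀ n : ℕ, k ≤ n →
      f n = (∑ i ∈ range (n + 1), (n.factorial / i.factorial : ℕ) : ℕ)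
        - (n.factorial / k.factorial : ℕ) * m + 1 := by
    intro n hn
    have hdvd : k.factorial ∣ n.factorial := Nat.factorial_dvd_factorial hn
    have hmul : (n.factorial / k.factorial : ℕ) * k.factorial = n.factorial :=
      Nat.div_mul_cancel hdvd
    have h1 : (n.factorial : ℚ) * q
        = ((n.factorial / k.factorial : ℕ) : ℚ) * ((k.factorial : ℚ) * q) := by
      rw [← mul_assoc, ← Nat.cast_mul, hmul]
    have h2 : (n.factorial : ℚ) * q
        = ((((n.factorial / k.factorial : ℕ) : ℤ) * m : ℤ) : ℚ) := by
      rw [h1, hm, Int.cast_mul, Int.cast_natCast]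
    have hq' : (n.factorial : ℝ) * (q : ℝ)
        = ((((n.factorial / k.factorial : ℕ) : ℤ) * m : ℤ) : ℝ) := by
      have := congrArg (fun x : ℚ => (x : ℝ)) h2
      push_cast at this ⊢
      exact this
    rw [hf n, mul_sub, hq', Int.floor_sub_intCast,
      floor_fact_exp n (le_trans (by omega) hn)]
  intro n hn
  have hdvdkn : k.factorial ∣ n.factorial := Nat.factorial_dvd_factorial hn
  have hsplit : (n.factorial / k.factorial : ℕ) *
        (∑ i ∈ range (k + 1), (k.factorial / i.factorial : ℕ))
        + ∑ i ∈ Finset.Icc (k + 1) n, (n.factorial / i.factorial : ℕ)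
      = ∑ i ∈ range (n + 1), (n.factorial / i.factorial : ℕ) := by
    have h1 : (n.factorial / k.factorial : ℕ) *
        (∑ i ∈ range (k + 1), (k.factorial / i.factorial : ℕ))
        = ∑ i ∈ range (k + 1), (n.factorial / i.factorial : ℕ) := by
      rw [Finset.mul_sum]
      refine Finset.sum_congr rfl fun i hi => ?_
      have hik : i ≤ k := Nat.lt_succ_iff.mp (Finset.mem_range.mp hi)
      have hdik : i.factorial ∣ k.factorial := Nat.factorial_dvd_factorial hik
      rw [Nat.div_mul_div_comm hdvdkn hdik, mul_comm n.factorial,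
        Nat.mul_div_mul_left _ _ (Nat.factorial_pos k)]
    have hIcc : Finset.Icc (k + 1) n = Finset.Ico (k + 1) (n + 1) := by
      rw [Finset.Ico_add_one_right_eq_Icc]
    rw [h1, hIcc, Finset.range_eq_Ico, Finset.range_eq_Ico]
    exact Finset.sum_Ico_consecutive (fun i => n.factorial / i.factorial) (by omega : 0 ≤ k + 1) (by omega : k + 1 ≤ n + 1)
  have hz : ((n.factorial / k.factorial : ℕ) : ℤ) *
        ((∑ i ∈ range (k + 1), (k.factorial / i.factorial : ℕ) : ℕ) : ℤ)
        + ∑ i ∈ Finset.Icc (k + 1) n, ((n.factorial / i.factorial : ℕ) : ℤ)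
      = ((∑ i ∈ range (n + 1), (n.factorial / i.factorial : ℕ) : ℕ) : ℤ) := by
    exact_mod_cast congrArg (Nat.cast (R := ℤ)) hsplit
  rw [hval n hn, hval k (le_refl k), Nat.div_self k.factorial_pos]
  push_cast at hz ⊢
  linear_combination -hz
end

section
/- Let S, R : ℕ → ℕ satisfy S(n) ≤ R(n) − 2 for all n ≥ 2, where R satisfies R(n+1) ≤ (n+1)·(R(n) − 1) + 2 for all n ≥ 2 and R(4) ≤ 62. Then S(n) ≤ n!·(e − 1/6) − 1 for all n ≥ 4. -/
theorem schur_bound (S R : ℕ → ℕ)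
    (hSR : ∀ n : ℕ, 2 ≤ n → (S n : ℤ) ≤ (R n : ℤ) - 2)
    (hR : ∀ n : ℕ, 2 ≤ n → (R (n + 1) : ℤ) ≤ (n + 1) * ((R n : ℤ) - 1) + 2)
    (h4 : R 4 ≤ 62) :
    ∀ n : ℕ, 4 ≤ n → (S n : ℝ) ≤ (n.factorial : ℝ) * (Real.exp 1 - 1 / 6) - 1 := by
  have key : ∀ n : ℕ, 4 ≤ n → (R n : ℝ) - 1 ≤
      (n.factorial : ℝ) * ((∑ k ∈ Finset.range (n + 1), (1 : ℝ) / k.factorial) - 1 / 6) := by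
    intro n hn
    induction n, hn using Nat.le_induction with
    | base =>
      have : (R 4 : ℝ) ≤ 62 := by exact_mod_cast h4
      have hsum : (∑ k ∈ Finset.range 5, (1 : ℝ) / k.factorial) = 65 / 24 := by
        simp [Finset.sum_range_succ, Nat.factorial]
        norm_num
      rw [hsum]
      norm_num [Nat.factorial]
      linarith
    | succ n hn ih =>
      have hstep := hR n (by omega)
      have hstep' : (R (n + 1) : ℝ) ≤ (n + 1) * ((R n : ℝ) - 1) + 2 := by
        exact_mod_cast hstep
      have hfact : ((n + 1).factorial : ℝ) = (n + 1) * n.factorial := by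
        push_cast [Nat.factorial_succ]; ring
      have hsum : (∑ k ∈ Finset.range (n + 2), (1 : ℝ) / k.factorial) =
          (∑ k ∈ Finset.range (n + 1), (1 : ℝ) / k.factorial) + 1 / (n + 1).factorial := by
        rw [Finset.sum_range_succ]
      rw [hsum, hfact]
      have hfpos : (0 : ℝ) < ((n + 1).factorial : ℝ) := by
        exact_mod_cast (n + 1).factorial_pos
      have hf0 : (0 : ℝ) < (n.factorial : ℝ) := by exact_mod_cast n.factorial_pos
      have h1 : ((n : ℝ) + 1) * (n.factorial : ℝ) * (1 / (((n : ℝ) + 1) * n.factorial)) = 1 := by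
        field_simp
      have hnn : (0 : ℝ) ≤ (n : ℝ) + 1 := by positivity
      nlinarith [mul_le_mul_of_nonneg_left ih hnn]
  intro n hn
  have h1 := hSR n (by omega)
  have h1' : (S n : ℝ) ≤ (R n : ℝ) - 2 := by exact_mod_cast h1
  have h2 := key n hn
  have h3 : (∑ k ∈ Finset.range (n + 1), (1 : ℝ) / k.factorial) ≤ Real.exp 1 := by
    have := Real.sum_le_exp_of_nonneg (x := 1) (by norm_num) (n + 1)
    simpa using this
  have hfpos : (0 : ℝ) ≤ (n.factorial : ℝ) := by positivity
  nlinarith [mul_le_mul_of_nonneg_left h3 hfpos]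
end
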